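/- arXiv:2409.08434 — 2 statements merged into one kernel-verified Lean document; each statement's English description precedes it below -/
import Mathlib

section
/- For a non-stationary finite MDP with diameter D (defined as D = max_s min_π sup_t E[time under π, started at s at time t, to reach the trajectory of optimal-value-maximizing states {s_i^*}]), the optimal value function satisfies sp(V_t^*) <= D for all t, where sp(v) = max_s v(s) - min_s v(s). -/
/-!
Compare the optimal value at the maximiser `star t` with the value at any state `x` by following,
from `x`, a policy that heads for the maximisers. One Bellman step costs at most one unit of reward
at `star t` (rewards lie in `[0, 1]`), while from `x` it leads to the next maximiser with no further
loss, or else to a state where the same comparison is made one step later. By backward induction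
on the remaining horizon the gap `V_t(star t) - V_t(x)` is bounded by the expected hitting time
`h t x`, and hence the span by `D`.
-/

noncomputable def sp {S : Type*} [Fintype S] [Nonempty S] (v : S → ℝ) : ℝ :=
  (⨆ i, v i) - ⨅ i, v i

/-- The Bellman optimality operator `L_t`. -/
noncomputable def bell {S A : Type*} [Fintype S] [Fintype A] [Nonempty A]
    (r : ℕ → S → A → ℝ) (P : ℕ → S → A → S → ℝ) (t : ℕ) (v : S → ℝ) : S → ℝ :=
  fun s => ⨆ a, (r t s a + ∑ s', P t s a s' * v s')

/-- `bellComp r P t n v = L_t ∘ ⋯ ∘ L_{t+n} v`. -/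
noncomputable def bellComp {S A : Type*} [Fintype S] [Fintype A] [Nonempty A]
    (r : ℕ → S → A → ℝ) (P : ℕ → S → A → S → ℝ) : ℕ → ℕ → (S → ℝ) → S → ℝ
  | t, 0, v => bell r P t v
  | t, n + 1, v => bell r P t (bellComp r P (t + 1) n v)

/-- `V_t^* = L_t ∘ ⋯ ∘ L_T 0`; for `t > T` the truncated subtraction makes it `L_t 0`. -/
noncomputable def Vstar {S A : Type*} [Fintype S] [Fintype A] [Nonempty A]
    (r : ℕ → S → A → ℝ) (P : ℕ → S → A → S → ℝ) (T t : ℕ) : S → ℝ :=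
  bellComp r P t (T - t) (fun _ => 0)

lemma sp_le_of_forall_sub_le {S : Type*} [Fintype S] [Nonempty S] {v : S → ℝ} {s : S} {c : ℝ}
    (hmax : ∀ x, v x ≤ v s) (hgap : ∀ x, v s - v x ≤ c) : sp v ≤ c := by
  have hsup : ⨆ x, v x ≤ v s := ciSup_le hmax
  have hinf : v s - c ≤ ⨅ x, v x := le_ciInf fun x => by linarith [hgap x]
  unfold sp
  linarith

section Bellman

variable {S A : Type*} [Fintype S] [Fintype A] [Nonempty A]
  {r : ℕ → S → A → ℝ} {P : ℕ → S → A → S → ℝ} {t : ℕ}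

lemma le_bell (v : S → ℝ) (s : S) (a : A) :
    r t s a + ∑ s', P t s a s' * v s' ≤ bell r P t v s :=
  le_ciSup (f := fun a => r t s a + ∑ s', P t s a s' * v s') (Set.finite_range _).bddAbove a

lemma bell_le {v : S → ℝ} {s : S} {M : ℝ} (h : ∀ a, r t s a + ∑ s', P t s a s' * v s' ≤ M) :
    bell r P t v s ≤ M :=
  ciSup_le h

lemma sum_mul_le_of_le {P : S → ℝ} (hP : ∀ y, 0 ≤ P y) (hrow : ∑ y, P y = 1) {v : S → ℝ}
    {m : ℝ} (hv : ∀ y, v y ≤ m) : ∑ y, P y * v y ≤ m :=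
  calc ∑ y, P y * v y ≤ ∑ y, P y * m := by gcongr with y; exacts [hP y, hv y]
    _ = m := by rw [← Finset.sum_mul, hrow, one_mul]

lemma bell_sub_bell_le (hr : ∀ s a, r t s a ∈ Set.Icc (0 : ℝ) 1) (hP : ∀ s a y, 0 ≤ P t s a y)
    (hrow : ∀ s a, ∑ y, P t s a y = 1) {v : S → ℝ} {m : ℝ} (hv : ∀ y, v y ≤ m) (s x : S)
    (a : A) : bell r P t v s - bell r P t v x ≤ 1 + ∑ y, P t x a y * (m - v y) := by
  have hs : bell r P t v s ≤ 1 + m :=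
    bell_le fun b => add_le_add (hr s b).2 (sum_mul_le_of_le (hP s b) (hrow s b) hv)
  have hx := le_bell (r := r) (P := P) (t := t) v x a
  have hsum : ∑ y, P t x a y * (m - v y) = m - ∑ y, P t x a y * v y := by
    simp only [mul_sub, Finset.sum_sub_distrib, ← Finset.sum_mul, hrow, one_mul]
  linarith [(hr x a).1]

end Bellman

section Vstar

variable {S A : Type*} [Fintype S] [Fintype A] [Nonempty A]
  {r : ℕ → S → A → ℝ} {P : ℕ → S → A → S → ℝ} {T t : ℕ}

lemma Vstar_of_sub_eq_zero (h : T - t = 0) : Vstar r P T t = bell r P t fun _ => 0 := by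
  rw [Vstar, h, bellComp]

lemma Vstar_of_sub_eq_succ {n : ℕ} (h : T - t = n + 1) :
    Vstar r P T t = bell r P t (Vstar r P T (t + 1)) := by
  rw [Vstar, Vstar, h, show T - (t + 1) = n by omega, bellComp]

end Vstar

/-- First-step equations characterising `h t x = E[d_t(x, π)]` for the target sequence `star`. -/
def IsHittingTime {S A : Type*} [Fintype S] [DecidableEq S] (P : ℕ → S → A → S → ℝ)
    (π : ℕ → S → A) (star : ℕ → S) (h : ℕ → S → ℝ) : Prop :=
  ∀ t x, h t x = 1 + ∑ y, P t x (π t x) y * (if y = star (t + 1) then 0 else h (t + 1) y)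

theorem Vstar_sub_le_hittingTime {S A : Type*} [Fintype S] [Fintype A] [Nonempty A]
    [DecidableEq S] {r : ℕ → S → A → ℝ} {P : ℕ → S → A → S → ℝ} {T : ℕ}
    (hr : ∀ t s a, r t s a ∈ Set.Icc (0 : ℝ) 1) (hP : ∀ t s a y, 0 ≤ P t s a y)
    (hrow : ∀ t s a, ∑ y, P t s a y = 1) {star : ℕ → S}
    (hstar : ∀ i s, Vstar r P T i s ≤ Vstar r P T i (star i)) {π : ℕ → S → A}
    {h : ℕ → S → ℝ} (hh : IsHittingTime P π star h) (hh0 : ∀ t x, 0 ≤ h t x) (t : ℕ) (x : S) :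
    Vstar r P T t (star t) - Vstar r P T t x ≤ h t x := by
  induction hn : T - t generalizing t x with
  | zero =>
    rw [Vstar_of_sub_eq_zero hn, hh t x]
    refine (bell_sub_bell_le (hr t) (hP t) (hrow t) (fun _ => le_refl 0) _ x (π t x)).trans ?_
    gcongr with y
    · exact hP t x _ y
    · split_ifs <;> simp [hh0]
  | succ n ih =>
    rw [Vstar_of_sub_eq_succ hn, hh t x]
    refine (bell_sub_bell_le (hr t) (hP t) (hrow t) (hstar (t + 1)) _ x (π t x)).trans ?_
    gcongr with y
    · exact hP t x _ y
    · split_ifs with hy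
      · simp [hy]
      · exact ih (t + 1) y (by omega)

/-- The span of the optimal value function is bounded by the diameter `D`: if from
every state and start time there is a policy whose expected travel time to the
sequence of optimal-value maximizers `{star i}` is at most `D` (travel times are
encoded by solutions of the one-step hitting-time equations), then `sp V_t^* ≤ D`. -/
theorem span_Vstar_le_diameter {S A : Type*} [Fintype S] [Nonempty S]
    [Fintype A] [Nonempty A] [DecidableEq S]
    (r : ℕ → S → A → ℝ) (P : ℕ → S → A → S → ℝ) (T : ℕ)
    (hr : ∀ t s a, r t s a ∈ Set.Icc (0 : ℝ) 1)
    (hP : ∀ t s a s', 0 ≤ P t s a s') (hrow : ∀ t s a, ∑ s', P t s a s' = 1)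
    (star : ℕ → S)
    (hstar : ∀ i s, Vstar r P T i s ≤ Vstar r P T i (star i))
    (D : ℝ)
    (hD : ∀ s : S, ∃ (π : ℕ → S → A) (h : ℕ → S → ℝ),
      (∀ t x, 0 ≤ h t x) ∧
      (∀ t x, h t x =
        1 + ∑ y, P t x (π t x) y * (if y = star (t + 1) then 0 else h (t + 1) y)) ∧
      ∀ t, h t s ≤ D) :
    ∀ t, sp (Vstar r P T t) ≤ D := by
  intro t
  refine sp_le_of_forall_sub_le (hstar t) fun x => ?_
  obtain ⟨π, h, hh0, hh, hhD⟩ := hD x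
  exact (Vstar_sub_le_hittingTime hr hP hrow hstar hh hh0 t x).trans (hhD t)
end

section
/- For row-stochastic matrices P₁, P₂ on a finite state space S and any vector v ∈ R^{|S|}, max_s (P₁ v)(s) - min_s (P₂ v)(s) <= sp([P₁; P₂] v), where [P₁; P₂] is the matrix formed by stacking the rows of P₁ and P₂ (a stochastic matrix from the disjoint union S ⊔ S to S), and consequently max_s (P₁v)(s) - min_s (P₂v)(s) <= (1 - min over s₁,s₂ ∈ S of sum_j min{P₁(j|s₁), P₂(j|s₂)})·sp(v). -/
open Finset

theorem sp_nonneg {S : Type*} [Fintype S] [Nonempty S] (v : S → ℝ) : 0 ≤ sp v :=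
  sub_nonneg.2 <| (Finite.ciInf_le v (Classical.arbitrary S)).trans (Finite.le_ciSup v _)

theorem ciSup_sub_ciInf_le_sp_sumElim {S : Type*} [Fintype S] [Nonempty S] (f g : S → ℝ) :
    (⨆ s, f s) - (⨅ s, g s) ≤ sp (Sum.elim f g) :=
  sub_le_sub (ciSup_le fun s => Finite.le_ciSup (Sum.elim f g) (Sum.inl s))
    (le_ciInf fun s => Finite.ciInf_le (Sum.elim f g) (Sum.inr s))

theorem ciSup_sub_ciInf_le {ι κ : Type*} [Nonempty ι] [Nonempty κ] {f : ι → ℝ} {g : κ → ℝ}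
    {c : ℝ} (h : ∀ i k, f i - g k ≤ c) : (⨆ i, f i) - (⨅ k, g k) ≤ c := by
  rw [sub_le_comm]
  exact le_ciInf fun k => sub_le_iff_le_add.2 <| ciSup_le fun i => by linarith [h i k]

theorem sum_mul_sub_sum_mul_le_sp {S : Type*} [Fintype S] [Nonempty S] {p q : S → ℝ}
    (hpq : ∑ j, p j = ∑ j, q j) (v : S → ℝ) :
    ∑ j, p j * v j - ∑ j, q j * v j ≤ (∑ j, p j - ∑ j, min (p j) (q j)) * sp v := by
  set r := fun j => min (p j) (q j)
  have excess_p : ∑ j, (p j - r j) * v j ≤ (∑ j, p j - ∑ j, r j) * ⨆ i, v i := by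
    rw [← sum_sub_distrib, sum_mul]
    exact sum_le_sum fun j _ =>
      mul_le_mul_of_nonneg_left (Finite.le_ciSup v j) (sub_nonneg.2 (min_le_left _ _))
  have excess_q : (∑ j, q j - ∑ j, r j) * ⨅ i, v i ≤ ∑ j, (q j - r j) * v j := by
    rw [← sum_sub_distrib, sum_mul]
    exact sum_le_sum fun j _ =>
      mul_le_mul_of_nonneg_left (Finite.ciInf_le v j) (sub_nonneg.2 (min_le_right _ _))
  have split : ∑ j, p j * v j - ∑ j, q j * v j
      = ∑ j, (p j - r j) * v j - ∑ j, (q j - r j) * v j := by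
    simp only [sub_mul, sum_sub_distrib]
    ring
  rw [split, sp, mul_sub]
  rw [← hpq] at excess_q
  linarith

theorem stacked_span_bound_general {S : Type*} [Fintype S] [Nonempty S]
    (P₁ P₂ : S → S → ℝ)
    (hrow₁ : ∀ i, ∑ j, P₁ i j = 1)
    (hrow₂ : ∀ i, ∑ j, P₂ i j = 1)
    (v : S → ℝ) :
    (⨆ s, ∑ j, P₁ s j * v j) - (⨅ s, ∑ j, P₂ s j * v j) ≤
      sp (Sum.elim (fun s => ∑ j, P₁ s j * v j) (fun s => ∑ j, P₂ s j * v j)) ∧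
    (⨆ s, ∑ j, P₁ s j * v j) - (⨅ s, ∑ j, P₂ s j * v j) ≤
      (1 - ⨅ s₁, ⨅ s₂, ∑ j, min (P₁ s₁ j) (P₂ s₂ j)) * sp v := by
  refine ⟨ciSup_sub_ciInf_le_sp_sumElim _ _, ciSup_sub_ciInf_le fun s₁ s₂ => ?_⟩
  have overlap_ge : (⨅ s₁, ⨅ s₂, ∑ j, min (P₁ s₁ j) (P₂ s₂ j)) ≤ ∑ j, min (P₁ s₁ j) (P₂ s₂ j) :=
    Finite.ciInf_le_of_le s₁ (Finite.ciInf_le _ s₂)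
  calc ∑ j, P₁ s₁ j * v j - ∑ j, P₂ s₂ j * v j
      ≤ (1 - ∑ j, min (P₁ s₁ j) (P₂ s₂ j)) * sp v := by
        simpa only [hrow₁] using
          sum_mul_sub_sum_mul_le_sp ((hrow₁ s₁).trans (hrow₂ s₂).symm) v
    _ ≤ (1 - ⨅ s₁, ⨅ s₂, ∑ j, min (P₁ s₁ j) (P₂ s₂ j)) * sp v :=
        mul_le_mul_of_nonneg_right (by linarith) (sp_nonneg v)

/-- For row-stochastic matrices `P₁, P₂` on a finite state space and any vector `v`,
`max_s (P₁ v)(s) - min_s (P₂ v)(s)` is at most the span of the stacked vector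
`[P₁; P₂] v` (over the disjoint union `S ⊕ S`), and consequently it is bounded by
the Dobrushin coefficient of the stacked stochastic matrix times `sp v`. -/
theorem stacked_span_bound {S : Type*} [Fintype S] [Nonempty S]
    (P₁ P₂ : S → S → ℝ)
    (hP₁ : ∀ i j, 0 ≤ P₁ i j) (hrow₁ : ∀ i, ∑ j, P₁ i j = 1)
    (hP₂ : ∀ i j, 0 ≤ P₂ i j) (hrow₂ : ∀ i, ∑ j, P₂ i j = 1)
    (v : S → ℝ) :
    (⨆ s, ∑ j, P₁ s j * v j) - (⨅ s, ∑ j, P₂ s j * v j) ≤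
      sp (Sum.elim (fun s => ∑ j, P₁ s j * v j) (fun s => ∑ j, P₂ s j * v j)) ∧
    (⨆ s, ∑ j, P₁ s j * v j) - (⨅ s, ∑ j, P₂ s j * v j) ≤
      (1 - ⨅ s₁, ⨅ s₂, ∑ j, min (P₁ s₁ j) (P₂ s₂ j)) * sp v :=
  stacked_span_bound_general P₁ P₂ hrow₁ hrow₂ v
end
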